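/- arXiv:2205.10924 — 6 statements merged into one kernel-verified Lean document; each statement's English description precedes it below -/
import Mathlib

section
/- With v_a and w_a as defined (v_a(x) = 1 + (c/2)x σ(x/a) + ν√(Δ(x/a)/a), w_a(x) = v_a(x)∫_0^x dt/v_a(t)²), for every fixed x ≠ 0 one has v_a(x) → 1 + (c/2)|x| and w_a(x) → x as a → 0⁺. -/
open MeasureTheory Filter Set Topology

theorem stmt5 (c ν M : ℝ) (hc : 0 ≤ c) (hν : 0 ≤ ν)
    (σ Δ : ℝ → ℝ) (hσ : ContDiff ℝ (⊤ : ℕ∞) σ) (hσodd : ∀ x, σ (-x) = - σ x)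
    (hσmono : StrictMono σ) (hσlim : Tendsto σ atTop (𝓝 1))
    (hΔ : ContDiff ℝ (⊤ : ℕ∞) Δ) (hΔpos : ∀ x, 0 < Δ x) (hΔeven : ∀ x, Δ (-x) = Δ x)
    (hΔ1 : ∫ x, Δ x = 1)
    (hΔsqrt : Integrable (fun x => Real.sqrt (Δ x)))
    (hM : ∀ x, x^2 * Δ x ≤ M)
    (v w : ℝ → ℝ → ℝ)
    (hv : ∀ a x, v a x = 1 + (c/2) * x * σ (x/a) + ν * Real.sqrt (Δ (x/a) / a))
    (hw : ∀ a x, w a x = v a x * ∫ t in (0:ℝ)..x, 1 / (v a t)^2)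
    (x : ℝ) (hx : x ≠ 0) :
    Tendsto (fun a => v a x) (𝓝[>] (0:ℝ)) (𝓝 (1 + (c/2) * |x|)) ∧
    Tendsto (fun a => w a x) (𝓝[>] (0:ℝ)) (𝓝 x) := by
  have hσ0 : σ 0 = 0 := by have := hσodd 0; simp at this; linarith
  have hσbot : Tendsto σ atBot (𝓝 (-1)) := by
    have h1 : Tendsto (fun s => -σ (-s)) atBot (𝓝 (-1)) :=
      (hσlim.comp tendsto_neg_atBot_atTop).neg
    exact h1.congr fun s => by rw [hσodd]; ring
  -- key pointwise convergence of v
  have key : ∀ t : ℝ, t ≠ 0 →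
      Tendsto (fun a => v a t) (𝓝[>] (0:ℝ)) (𝓝 (1 + (c/2) * |t|)) := by
    intro t ht
    have ha_pos : ∀ᶠ a in 𝓝[>] (0:ℝ), (0:ℝ) < a := self_mem_nhdsWithin
    have ht2 : (0:ℝ) < t^2 := by positivity
    -- term3
    have hb : Tendsto (fun a : ℝ => M * a / t^2) (𝓝[>] (0:ℝ)) (𝓝 0) := by
      have : Tendsto (fun a : ℝ => M * a / t^2) (𝓝 (0:ℝ)) (𝓝 (M * 0 / t^2)) := by
        exact (tendsto_id.const_mul M).div_const _
      simpa using this.mono_left nhdsWithin_le_nhds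
    have hΔlim : Tendsto (fun a : ℝ => Δ (t/a) / a) (𝓝[>] (0:ℝ)) (𝓝 0) := by
      apply tendsto_of_tendsto_of_tendsto_of_le_of_le' tendsto_const_nhds hb
      · filter_upwards [ha_pos] with a ha
        exact div_nonneg (hΔpos _).le ha.le
      · filter_upwards [ha_pos] with a ha
        have h1 := hM (t/a)
        have h2 : Δ (t/a) ≤ M * a^2 / t^2 := by
          rw [div_pow] at h1
          rw [le_div_iff₀ ht2]
          calc Δ (t/a) * t^2 = t^2 / a^2 * Δ (t/a) * a^2 := by field_simp
            _ ≤ M * a^2 := by nlinarith [sq_nonneg a, hΔpos (t/a)]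
        calc Δ (t/a) / a ≤ (M * a^2 / t^2) / a := by
              apply div_le_div_of_nonneg_right h2 ha.le
          _ = M * a / t^2 := by field_simp
    have hterm3 : Tendsto (fun a : ℝ => ν * Real.sqrt (Δ (t/a) / a)) (𝓝[>] (0:ℝ)) (𝓝 0) := by
      have := (Real.continuous_sqrt.tendsto' 0 0 Real.sqrt_zero).comp hΔlim
      simpa using this.const_mul ν
    have hterm2 : Tendsto (fun a : ℝ => (c/2) * t * σ (t/a)) (𝓝[>] (0:ℝ))
        (𝓝 ((c/2) * |t|)) := by
      rcases ht.lt_or_gt with htneg | htpos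
      · have hfrac : Tendsto (fun a : ℝ => t / a) (𝓝[>] (0:ℝ)) atBot := by
          have : Tendsto (fun a : ℝ => -(-t / a)) (𝓝[>] (0:ℝ)) atBot := by
            apply tendsto_neg_atTop_atBot.comp
            have := tendsto_inv_nhdsGT_zero.const_mul_atTop (neg_pos.mpr htneg)
            exact this.congr fun a => by rw [div_eq_mul_inv]
          exact this.congr fun a => by ring_nf
        have := (hσbot.comp hfrac).const_mul ((c/2) * t)
        have heq : (c/2) * t * (-1) = (c/2) * |t| := by
          rw [abs_of_neg htneg]; ring
        simpa [heq] using this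
      · have hfrac : Tendsto (fun a : ℝ => t / a) (𝓝[>] (0:ℝ)) atTop := by
          have := tendsto_inv_nhdsGT_zero.const_mul_atTop htpos
          exact this.congr fun a => by rw [div_eq_mul_inv]
        have := (hσlim.comp hfrac).const_mul ((c/2) * t)
        have heq : (c/2) * t * 1 = (c/2) * |t| := by
          rw [abs_of_pos htpos]; ring
        simpa [heq] using this
    have := ((tendsto_const_nhds : Tendsto (fun _ : ℝ => (1:ℝ)) (𝓝[>] (0:ℝ)) (𝓝 1)).add hterm2).add hterm3
    have heq : ∀ a, 1 + (c/2) * t * σ (t/a) + ν * Real.sqrt (Δ (t/a) / a) = v a t :=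
      fun a => (hv a t).symm
    simpa [heq] using this
  -- v ≥ 1 for a > 0
  have hvge : ∀ a : ℝ, 0 < a → ∀ t : ℝ, 1 ≤ v a t := by
    intro a ha t
    rw [hv]
    have h1 : 0 ≤ (c/2) * t * σ (t/a) := by
      rcases lt_trichotomy t 0 with h | h | h
      · have hs : σ (t/a) < 0 := by
          rw [← hσ0]; exact hσmono (div_neg_of_neg_of_pos h ha)
        have := mul_pos_of_neg_of_neg h hs
        nlinarith
      · simp [h, hσ0]
      · have hs : 0 < σ (t/a) := by
          rw [← hσ0]; exact hσmono (by positivity)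
        have := mul_pos h hs
        nlinarith
    have h2 : 0 ≤ ν * Real.sqrt (Δ (t/a) / a) := by positivity
    linarith
  refine ⟨key x hx, ?_⟩
  set L : ℝ := 1 + (c/2) * |x| with hLdef
  have hLpos : 0 < L := by positivity
  -- convergence of the integral by dominated convergence
  have hInt : Tendsto (fun a => ∫ t in (0:ℝ)..x, 1 / (v a t)^2) (𝓝[>] (0:ℝ))
      (𝓝 (∫ t in (0:ℝ)..x, 1 / (1 + (c/2) * |t|)^2)) := by
    apply intervalIntegral.tendsto_integral_filter_of_dominated_convergence
      (bound := fun _ => (1:ℝ))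
    · filter_upwards [self_mem_nhdsWithin] with a (ha : (0:ℝ) < a)
      apply Continuous.aestronglyMeasurable
      have hvc : Continuous (v a) := by
        have h1 : Continuous fun t : ℝ =>
            1 + (c/2) * t * σ (t/a) + ν * Real.sqrt (Δ (t/a) / a) := by
          have hs : Continuous fun t : ℝ => σ (t/a) :=
            hσ.continuous.comp (continuous_id.div_const a)
          have hd : Continuous fun t : ℝ => Real.sqrt (Δ (t/a) / a) :=
            Real.continuous_sqrt.comp
              ((hΔ.continuous.comp (continuous_id.div_const a)).div_const a)
          exact (continuous_const.add (((continuous_const.mul continuous_id).mul hs))).add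
            (continuous_const.mul hd)
        have : v a = fun t : ℝ =>
            1 + (c/2) * t * σ (t/a) + ν * Real.sqrt (Δ (t/a) / a) := funext fun t => hv a t
        rw [this]; exact h1
      exact continuous_const.div (hvc.pow 2)
        (fun t => pow_ne_zero 2 (zero_lt_one.trans_le (hvge a ha t)).ne')
    · filter_upwards [self_mem_nhdsWithin] with a (ha : (0:ℝ) < a)
      refine ae_of_all _ fun t _ => ?_
      have h1 := hvge a ha t
      have h2 : (1:ℝ) ≤ (v a t)^2 := by nlinarith
      rw [Real.norm_eq_abs, abs_of_nonneg (by positivity)]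
      rw [div_le_one (by positivity)]
      exact h2
    · exact intervalIntegrable_const
    · have h0 : ∀ᵐ (t : ℝ), t ≠ 0 := by
        refine (MeasureTheory.ae_iff).mpr ?_
        simp only [ne_eq, not_not, Set.setOf_eq_eq_singleton]
        exact Real.volume_singleton
      filter_upwards [h0] with t ht _
      have hk := key t ht
      have hpos : (0:ℝ) < 1 + (c/2) * |t| := by positivity
      exact tendsto_const_nhds.div (hk.pow 2) (pow_ne_zero 2 hpos.ne')
  -- value of the limit integral
  have hval : ∫ t in (0:ℝ)..x, 1 / (1 + (c/2) * |t|)^2 = x / L := by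
    rcases hx.lt_or_gt with hxneg | hxpos
    · have huIcc : Set.uIcc (0:ℝ) x = Set.Icc x 0 := by
        rw [Set.uIcc_of_ge hxneg.le]
      have hcong : ∀ t ∈ Set.uIcc (0:ℝ) x,
          (fun t => 1 / (1 + (c/2) * |t|)^2) t = (fun t => 1 / (1 - (c/2) * t)^2) t := by
        intro t ht
        rw [huIcc] at ht
        simp only
        rw [abs_of_nonpos ht.2]; ring_nf
      rw [intervalIntegral.integral_congr hcong]
      have hderiv : ∀ t ∈ Set.uIcc (0:ℝ) x,
          HasDerivAt (fun t : ℝ => t / (1 - (c/2) * t)) (1 / (1 - (c/2) * t)^2) t := by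
        intro t ht
        rw [huIcc] at ht
        have hne : 1 - (c/2) * t ≠ 0 := by nlinarith [ht.2]
        have h := (hasDerivAt_id t).div
          ((hasDerivAt_const t (1:ℝ)).sub ((hasDerivAt_id t).const_mul (c/2))) hne
        refine h.congr_deriv ?_; simp [id]; ring
      have hcont : ContinuousOn (fun t : ℝ => 1 / (1 - (c/2) * t)^2) (Set.uIcc (0:ℝ) x) := by
        apply ContinuousOn.div continuousOn_const
        · exact ((continuousOn_const.sub (continuousOn_const.mul continuousOn_id)).pow 2)
        · intro t ht
          rw [huIcc] at ht
          have hne : (0:ℝ) < 1 - (c/2) * t := by nlinarith [ht.2]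
          positivity
      rw [intervalIntegral.integral_eq_sub_of_hasDerivAt hderiv
        (hcont.intervalIntegrable)]
      have hd : (0:ℝ) < 1 - (c/2) * x := by nlinarith
      rw [hLdef, abs_of_neg hxneg]
      simp only [zero_div, sub_zero, mul_zero, sub_zero]
      norm_num
      ring_nf
    · have huIcc : Set.uIcc (0:ℝ) x = Set.Icc 0 x := by
        rw [Set.uIcc_of_le hxpos.le]
      have hcong : ∀ t ∈ Set.uIcc (0:ℝ) x,
          (fun t => 1 / (1 + (c/2) * |t|)^2) t = (fun t => 1 / (1 + (c/2) * t)^2) t := by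
        intro t ht
        rw [huIcc] at ht
        simp only
        rw [abs_of_nonneg ht.1]
      rw [intervalIntegral.integral_congr hcong]
      have hderiv : ∀ t ∈ Set.uIcc (0:ℝ) x,
          HasDerivAt (fun t : ℝ => t / (1 + (c/2) * t)) (1 / (1 + (c/2) * t)^2) t := by
        intro t ht
        rw [huIcc] at ht
        have hne : 1 + (c/2) * t ≠ 0 := by nlinarith [ht.1]
        have h := (hasDerivAt_id t).div
          ((hasDerivAt_const t (1:ℝ)).add ((hasDerivAt_id t).const_mul (c/2))) hne
        refine h.congr_deriv ?_; simp [id]; ring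
      have hcont : ContinuousOn (fun t : ℝ => 1 / (1 + (c/2) * t)^2) (Set.uIcc (0:ℝ) x) := by
        apply ContinuousOn.div continuousOn_const
        · exact ((continuousOn_const.add (continuousOn_const.mul continuousOn_id)).pow 2)
        · intro t ht
          rw [huIcc] at ht
          have hne : (0:ℝ) < 1 + (c/2) * t := by nlinarith [ht.1]
          positivity
      rw [intervalIntegral.integral_eq_sub_of_hasDerivAt hderiv
        (hcont.intervalIntegrable)]
      rw [hLdef, abs_of_pos hxpos]
      simp only [zero_div, sub_zero, mul_zero, add_zero]
  rw [hval] at hInt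
  have hmul := (key x hx).mul hInt
  have hLx : L * (x / L) = x := mul_div_cancel₀ x hLpos.ne'
  have heq2 : (fun a => v a x * ∫ t in (0:ℝ)..x, 1 / (v a t)^2) = fun a => w a x :=
    funext fun a => (hw a x).symm
  rw [heq2] at hmul
  rw [← hLdef] at hmul
  simpa [hLx] using hmul
end

section
/- Let E, c, ν be real with ν ≥ 0, and let ψ : ℝ → ℝ satisfy the integral equation ψ(x) = E(1 + (c/2)|x|)∫_0^x ψ(y) y dy − E x ∫_0^x ψ(y)(1 + (c/2)|y|) dy − (EAν²/2)|x| + A(1 + (c/2)|x|) + Bx for all x. Then ψ is continuous at 0 with ψ(0) = A, the one-sided derivatives satisfy ψ'(0+) − ψ'(0−) = (c − Eν²) ψ(0), and ψ'' + Eψ = 0 for x ≠ 0. -/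
open MeasureTheory Filter Set Topology

/-!
On a half-line where `|x| = σ x` (`σ = ±1`), the right-hand side has the variation-of-parameters
form `E (w(x) ∫₀ˣ ψ(y) y dy - x ∫₀ˣ ψ w) + ℓ(x)` with `w(x) = 1 + (c/2) σ x` and `ℓ` affine, so
differentiating once leaves `ψ' = E ((c/2) σ ∫₀ˣ ψ(y) y dy - ∫₀ˣ ψ w) + const(σ)` and once more
`ψ'' = E ψ ((c/2) σ x - w(x)) = -E ψ`. At `0` the integrals vanish and the two one-sided
derivatives differ only through `σ`, giving the jump `(c - E ν²) A`.
-/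

/-- The terms coming from differentiating the integrals cancel. -/
theorem HasDerivWithinAt.mul_integral_sub_mul_integral {f u w : ℝ → ℝ} {u' w' x : ℝ}
    {S : Set ℝ} (hfu : Continuous fun y => f y * u y) (hfw : Continuous fun y => f y * w y)
    (hu : HasDerivWithinAt u u' S x) (hw : HasDerivWithinAt w w' S x) :
    HasDerivWithinAt
      (fun t => w t * (∫ y in (0:ℝ)..t, f y * u y) - u t * ∫ y in (0:ℝ)..t, f y * w y)
      (w' * (∫ y in (0:ℝ)..x, f y * u y) - u' * ∫ y in (0:ℝ)..x, f y * w y) S x := by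
  have hU := (hfu.integral_hasStrictDerivAt 0 x).hasDerivAt.hasDerivWithinAt (s := S)
  have hW := (hfw.integral_hasStrictDerivAt 0 x).hasDerivAt.hasDerivWithinAt (s := S)
  refine ((hw.mul hU).sub (hu.mul hW)).congr_deriv ?_
  ring

def IsIntegralEqSolution (E c ν A B : ℝ) (ψ : ℝ → ℝ) : Prop :=
  ∀ x, ψ x = E * (1 + (c/2) * |x|) * (∫ y in (0:ℝ)..x, ψ y * y)
    - E * x * (∫ y in (0:ℝ)..x, ψ y * (1 + (c/2) * |y|))
    - (E * A * ν^2 / 2) * |x| + A * (1 + (c/2) * |x|) + B * x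

/-- The derivative of a solution `ψ` on a branch where `|·|` has slope `σ = ±1`. -/
noncomputable def branchDeriv (E c ν A B : ℝ) (ψ : ℝ → ℝ) (σ x : ℝ) : ℝ :=
  E * ((c/2) * σ * (∫ y in (0:ℝ)..x, ψ y * y) - ∫ y in (0:ℝ)..x, ψ y * (1 + (c/2) * |y|))
    + (A * (c/2) - E * A * ν^2 / 2) * σ + B

namespace IsIntegralEqSolution

variable {E c ν A B : ℝ} {ψ : ℝ → ℝ}

theorem apply_zero (h : IsIntegralEqSolution E c ν A B ψ) : ψ 0 = A := by
  simpa using h 0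

theorem hasDerivWithinAt (h : IsIntegralEqSolution E c ν A B ψ) (hψc : Continuous ψ)
    {S : Set ℝ} {x σ : ℝ} (habs : HasDerivWithinAt (|·|) σ S x) :
    HasDerivWithinAt ψ (branchDeriv E c ν A B ψ σ x) S x := by
  have hw : HasDerivWithinAt (fun t => 1 + (c/2) * |t|) ((c/2) * σ) S x :=
    (habs.const_mul (c/2)).const_add 1
  have hV := HasDerivWithinAt.mul_integral_sub_mul_integral (f := ψ) (u := fun y => y)
    (hψc.mul continuous_id) (hψc.mul (by fun_prop)) (hasDerivWithinAt_id x S) hw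
  have hψ' := ((hV.const_mul E).sub (habs.const_mul (E * A * ν^2 / 2))).add
    ((hw.const_mul A).add ((hasDerivWithinAt_id x S).const_mul B))
  refine (hψ'.congr (fun t _ => (h t).trans ?_) ((h x).trans ?_)).congr_deriv ?_
  all_goals
    simp only [branchDeriv, Pi.add_apply, Pi.sub_apply, id]
    ring

theorem deriv_eventuallyEq (h : IsIntegralEqSolution E c ν A B ψ) (hψc : Continuous ψ)
    {x : ℝ} (hx : x ≠ 0) :
    deriv ψ =ᶠ[𝓝 x] branchDeriv E c ν A B ψ (SignType.sign x) := by
  have hsign : ∀ᶠ t in 𝓝 x, SignType.sign t = SignType.sign x :=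
    (continuousAt_sign_of_ne_zero hx).eventually_mem
      ((isOpen_discrete {SignType.sign x}).mem_nhds rfl)
  filter_upwards [hsign, eventually_ne_nhds hx] with t ht ht0
  rw [← ht]
  exact ((h.hasDerivWithinAt hψc (hasDerivAt_abs ht0).hasDerivWithinAt).hasDerivAt
    univ_mem).deriv

theorem deriv_deriv_add_mul (h : IsIntegralEqSolution E c ν A B ψ) (hψc : Continuous ψ)
    {x : ℝ} (hx : x ≠ 0) : deriv (deriv ψ) x + E * ψ x = 0 := by
  have hF := (hψc.mul continuous_id : Continuous fun y => ψ y * y).integral_hasStrictDerivAt 0 x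
  have hG := (hψc.mul (by fun_prop) : Continuous fun y => ψ y * (1 + (c/2) * |y|)
    ).integral_hasStrictDerivAt 0 x
  have hD : HasDerivAt (branchDeriv E c ν A B ψ (SignType.sign x))
      (E * ((c/2) * SignType.sign x * (ψ x * x) - ψ x * (1 + (c/2) * |x|))) x :=
    ((((hF.hasDerivAt.const_mul _).sub hG.hasDerivAt).const_mul E).add_const _).add_const B
  rw [(h.deriv_eventuallyEq hψc hx).deriv_eq, hD.deriv, ← sign_mul_self x]
  ring

end IsIntegralEqSolution

theorem stmt8_general (E c ν A B : ℝ) (ψ : ℝ → ℝ) (hψc : Continuous ψ)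
    (hψ : ∀ x, ψ x = E * (1 + (c/2) * |x|) * (∫ y in (0:ℝ)..x, ψ y * y)
      - E * x * (∫ y in (0:ℝ)..x, ψ y * (1 + (c/2) * |y|))
      - (E * A * ν^2 / 2) * |x| + A * (1 + (c/2) * |x|) + B * x) :
    ψ 0 = A ∧ ContinuousAt ψ 0 ∧
    (∃ d₁ d₂ : ℝ, HasDerivWithinAt ψ d₁ (Ici 0) 0 ∧
      HasDerivWithinAt ψ d₂ (Iic 0) 0 ∧ d₁ - d₂ = (c - E * ν^2) * ψ 0) ∧
    (∀ x, x ≠ 0 → deriv (deriv ψ) x + E * ψ x = 0) := by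
  have h : IsIntegralEqSolution E c ν A B ψ := hψ
  have habs_right : HasDerivWithinAt (|·|) 1 (Ici 0) (0:ℝ) :=
    (hasDerivWithinAt_id _ _).congr_of_mem (fun _ hy => abs_of_nonneg hy) self_mem_Ici
  have habs_left : HasDerivWithinAt (|·|) (-1) (Iic 0) (0:ℝ) :=
    (hasDerivWithinAt_neg _ _).congr_of_mem (fun _ hy => abs_of_nonpos hy) self_mem_Iic
  refine ⟨h.apply_zero, hψc.continuousAt, ⟨_, _, h.hasDerivWithinAt hψc habs_right,
    h.hasDerivWithinAt hψc habs_left, ?_⟩, fun x hx => h.deriv_deriv_add_mul hψc hx⟩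
  simp only [branchDeriv, intervalIntegral.integral_same, h.apply_zero]
  ring

theorem stmt8 (E c ν A B : ℝ) (hν : 0 ≤ ν) (ψ : ℝ → ℝ) (hψc : Continuous ψ)
    (hψ : ∀ x, ψ x = E * (1 + (c/2) * |x|) * (∫ y in (0:ℝ)..x, ψ y * y)
      - E * x * (∫ y in (0:ℝ)..x, ψ y * (1 + (c/2) * |y|))
      - (E * A * ν^2 / 2) * |x| + A * (1 + (c/2) * |x|) + B * x) :
    ψ 0 = A ∧ ContinuousAt ψ 0 ∧
    (∃ d₁ d₂ : ℝ, HasDerivWithinAt ψ d₁ (Ici 0) 0 ∧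
      HasDerivWithinAt ψ d₂ (Iic 0) 0 ∧ d₁ - d₂ = (c - E * ν^2) * ψ 0) ∧
    (∀ x, x ≠ 0 → deriv (deriv ψ) x + E * ψ x = 0) :=
  stmt8_general E c ν A B ψ hψc hψ
end

section
/- For k > 0 satisfying tan(kL/2) = α(k) with α(k) = c/(2k) − kν²/2, the norm of ψ^{[k]}(x) = cos(kx) + α(k) sin(k|x|) with respect to the inner product [φ|ψ] = ∫_{-L/2}^{L/2} φψ dx + ν²φ(0)ψ(0) equals Z_k² = (L/2)(1 + α(k)²) + α(k)/k + ν². -/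
/-! Since `ψ x = g |x|` with `g y = cos (k y) + α sin (k y)`, the integral is twice the integral of
`g ^ 2 = (1 + α²)/2 + (1 - α²)/2 · cos (2ky) + α sin (2ky)` over `[0, L/2]`. The boundary terms
`(1 - α²) sin (kL) + 2α (1 - cos (kL))` collapse to `2α` exactly because `α = tan (kL/2)`. -/

open MeasureTheory Set Real

theorem Real.two_mul_tan_eq (θ : ℝ) :
    2 * tan θ = (1 - tan θ ^ 2) * sin (2 * θ) + 2 * tan θ * (1 - cos (2 * θ)) := by
  rw [sin_two_mul, cos_two_mul, tan_eq_sin_div_cos]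
  rcases eq_or_ne (cos θ) 0 with hc | hc
  · simp [hc]
  · field_simp
    linear_combination sin θ * sin_sq_add_cos_sq θ

theorem intervalIntegral.integral_comp_abs_symm {f : ℝ → ℝ} {a : ℝ} (ha : 0 ≤ a)
    (hf : IntervalIntegrable f volume 0 a) :
    ∫ x in -a..a, f |x| = 2 * ∫ x in 0..a, f x := by
  have hpos : EqOn (fun x => f |x|) f (uIcc 0 a) := fun x hx => by
    rw [uIcc_of_le ha] at hx
    simp only [abs_of_nonneg hx.1]
  have hneg : EqOn (fun x => f |x|) (fun x => f (-x)) (uIcc (-a) 0) := fun x hx => by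
    rw [uIcc_of_le (neg_nonpos.mpr ha)] at hx
    simp only [abs_of_nonpos hx.2]
  have hf_neg : IntervalIntegrable (fun x => f (-x)) volume (-a) 0 := by
    simpa using ((IntervalIntegrable.iff_comp_neg).mp hf).symm
  rw [← integral_add_adjacent_intervals (hf_neg.congr (hneg.symm.mono uIoc_subset_uIcc))
      (hf.congr (hpos.symm.mono uIoc_subset_uIcc)),
    integral_congr hneg, integral_congr hpos, integral_comp_neg]
  simp only [neg_zero, neg_neg]
  ring

theorem integral_cos_add_mul_sin_sq (k α a : ℝ) (hk : k ≠ 0) :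
    ∫ x in (0 : ℝ)..a, (cos (k * x) + α * sin (k * x)) ^ 2
      = (1 + α ^ 2) / 2 * a + (1 - α ^ 2) / (4 * k) * sin (2 * k * a)
        + α / (2 * k) * (1 - cos (2 * k * a)) := by
  set F : ℝ → ℝ := fun x =>
    (1 + α ^ 2) / 2 * x + (1 - α ^ 2) / (4 * k) * sin (2 * k * x) - α / (2 * k) * cos (2 * k * x)
  have hF : ∀ x, HasDerivAt F ((cos (k * x) + α * sin (k * x)) ^ 2) x := by
    intro x
    have hlin : HasDerivAt (fun x : ℝ => 2 * k * x) (2 * k) x := by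
      simpa using (hasDerivAt_id x).const_mul (2 * k)
    refine ((((hasDerivAt_id x).const_mul ((1 + α ^ 2) / 2)).add
      (((hasDerivAt_sin _).comp x hlin).const_mul ((1 - α ^ 2) / (4 * k)))).sub
      (((hasDerivAt_cos _).comp x hlin).const_mul (α / (2 * k)))).congr_deriv ?_
    calc _ = (1 + α ^ 2) / 2 + (1 - α ^ 2) / 2 * cos (2 * (k * x)) + α * sin (2 * (k * x)) := by
          rw [show 2 * k * x = 2 * (k * x) by ring]
          field_simp
          ring
      _ = _ := by
          rw [cos_two_mul, sin_two_mul]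
          linear_combination -α ^ 2 * sin_sq_add_cos_sq (k * x)
  rw [intervalIntegral.integral_eq_sub_of_hasDerivAt (fun x _ => hF x)
    (by apply Continuous.intervalIntegrable; fun_prop)]
  simp only [F, mul_zero, sin_zero, cos_zero]
  ring

theorem stmt11_general (ν L : ℝ) (hL : 0 < L)
    (k : ℝ) (hk : 0 < k) (α : ℝ)
    (hquant : Real.tan (k*L/2) = α)
    (ψ : ℝ → ℝ) (hψ : ∀ x, ψ x = Real.cos (k*x) + α * Real.sin (k*|x|)) :
    (∫ x in (-L/2)..(L/2), ψ x * ψ x) + ν^2 * ψ 0 * ψ 0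
      = (L/2) * (1 + α^2) + α/k + ν^2 := by
  have hψ_abs : ∀ x, ψ x * ψ x = (cos (k * |x|) + α * sin (k * |x|)) ^ 2 := by
    intro x
    rcases abs_choice x with h | h <;> simp [hψ, h, sq]
  have hψ0 : ψ 0 = 1 := by simp [hψ]
  rw [neg_div, intervalIntegral.integral_congr (fun x _ => hψ_abs x),
    intervalIntegral.integral_comp_abs_symm
      (f := fun y => (cos (k * y) + α * sin (k * y)) ^ 2) (by positivity)
      (by apply Continuous.intervalIntegrable; fun_prop),
    integral_cos_add_mul_sin_sq k α _ hk.ne', hψ0,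
    show 2 * k * (L / 2) = 2 * (k * L / 2) by ring]
  have htan := two_mul_tan_eq (k * L / 2)
  rw [hquant] at htan
  linear_combination (-1 / (2 * k)) * htan

theorem stmt11 (c ν L : ℝ) (hL : 0 < L)
    (k : ℝ) (hk : 0 < k) (α : ℝ) (hα : α = c/(2*k) - k*ν^2/2)
    (hquant : Real.tan (k*L/2) = α)
    (ψ : ℝ → ℝ) (hψ : ∀ x, ψ x = Real.cos (k*x) + α * Real.sin (k*|x|)) :
    (∫ x in (-L/2)..(L/2), ψ x * ψ x) + ν^2 * ψ 0 * ψ 0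
      = (L/2) * (1 + α^2) + α/k + ν^2 :=
  stmt11_general ν L hL k hk α hquant ψ hψ
end

section
/- For each real c ≥ 0, ν ≥ 0, L > 0, and each integer n ≥ 0, the quantization equation tan(kL/2) = c/(2k) − kν²/2 has at least one solution k in the interval (2πn/L, 2π(n+1)/L). -/
open MeasureTheory Filter Set Topology

private lemma g_anti12 (c ν : ℝ) (hc : 0 ≤ c) {x y : ℝ} (hx : 0 < x) (hxy : x ≤ y) :
    c/(2*y) - y*ν^2/2 ≤ c/(2*x) - x*ν^2/2 := by
  have hy : 0 < y := lt_of_lt_of_le hx hxy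
  have h1 : c/(2*y) ≤ c/(2*x) := by gcongr
  nlinarith [mul_nonneg (sub_nonneg.2 hxy) (sq_nonneg ν)]

private lemma cos_ne_zero_left12 (n : ℕ) {x : ℝ} (h1 : n*Real.pi < x)
    (h2 : x < n*Real.pi + Real.pi/2) : Real.cos x ≠ 0 := by
  intro h
  obtain ⟨j, hj⟩ := Real.cos_eq_zero_iff.1 h
  subst hj
  have hπ := Real.pi_pos
  have ha : (2*(n:ℝ)) < 2*j+1 := by nlinarith
  have hb : (2*(j:ℝ)+1) < 2*n+1 := by nlinarith
  have ha' : (2*(n:ℤ)) < 2*j+1 := by exact_mod_cast ha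
  have hb' : (2*(j:ℤ)+1) < 2*n+1 := by exact_mod_cast hb
  omega

private lemma cos_ne_zero_right12 (n : ℕ) {x : ℝ} (h1 : n*Real.pi + Real.pi/2 < x)
    (h2 : x < (n+1)*Real.pi) : Real.cos x ≠ 0 := by
  intro h
  obtain ⟨j, hj⟩ := Real.cos_eq_zero_iff.1 h
  subst hj
  have hπ := Real.pi_pos
  have ha : (2*(n:ℝ)+1) < 2*j+1 := by nlinarith
  have hb : (2*(j:ℝ)+1) < 2*(n+1) := by nlinarith
  have ha' : (2*(n:ℤ)+1) < 2*j+1 := by exact_mod_cast ha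
  have hb' : (2*(j:ℤ)+1) < 2*((n:ℤ)+1) := by exact_mod_cast hb
  omega

private lemma arctan_lt_zero12 {t : ℝ} (ht : t < 0) : Real.arctan t < 0 := by
  rw [show (0:ℝ) = Real.arctan 0 by simp]
  exact Real.arctan_strictMono ht

private lemma arctan_pos12 {t : ℝ} (ht : 0 < t) : 0 < Real.arctan t := by
  rw [show (0:ℝ) = Real.arctan 0 by simp]
  exact Real.arctan_strictMono ht

private lemma tan_shift12 (j : ℕ) (x : ℝ) : Real.tan (x + j*Real.pi) = Real.tan x :=
  (Real.tan_periodic.nat_mul j) x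

private lemma ivt_aux12 (c ν L x₁ x₂ : ℝ) (hL : 0 < L) (hx1 : 0 < x₁) (hx : x₁ ≤ x₂)
    (hcos : ∀ x ∈ Icc x₁ x₂, Real.cos x ≠ 0)
    (h1 : Real.tan x₁ ≤ c/(2*(2*x₁/L)) - (2*x₁/L)*ν^2/2)
    (h2 : c/(2*(2*x₂/L)) - (2*x₂/L)*ν^2/2 ≤ Real.tan x₂) :
    ∃ k ∈ Icc (2*x₁/L) (2*x₂/L), Real.tan (k*L/2) = c/(2*k) - k*ν^2/2 := by
  have hLne : L ≠ 0 := hL.ne'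
  have hk1 : (2*x₁/L)*L/2 = x₁ := by field_simp
  have hk2 : (2*x₂/L)*L/2 = x₂ := by field_simp
  have hk1pos : 0 < 2*x₁/L := by positivity
  have hkle : 2*x₁/L ≤ 2*x₂/L := by gcongr
  have hcont : ContinuousOn (fun k => Real.tan (k*L/2) - (c/(2*k) - k*ν^2/2))
      (Icc (2*x₁/L) (2*x₂/L)) := by
    intro k hk
    have hkpos : 0 < k := lt_of_lt_of_le hk1pos hk.1
    have hxmem : k*L/2 ∈ Icc x₁ x₂ := by
      constructor
      · calc x₁ = (2*x₁/L)*L/2 := hk1.symm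
          _ ≤ k*L/2 := by gcongr; exact hk.1
      · calc k*L/2 ≤ (2*x₂/L)*L/2 := by gcongr; exact hk.2
          _ = x₂ := hk2
    have hc1 : ContinuousAt (fun k : ℝ => Real.tan (k*L/2)) k :=
      (Real.continuousAt_tan.2 (hcos _ hxmem)).comp (f := fun k : ℝ => k*L/2) (by fun_prop)
    have hc2 : ContinuousAt (fun k : ℝ => c/(2*k) - k*ν^2/2) k := by
      apply ContinuousAt.sub
      · exact continuousAt_const.div (by fun_prop) (by positivity)
      · fun_prop
    exact (hc1.sub hc2).continuousWithinAt
  have hmem : (0:ℝ) ∈ Icc (Real.tan ((2*x₁/L)*L/2) - (c/(2*(2*x₁/L)) - (2*x₁/L)*ν^2/2))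
      (Real.tan ((2*x₂/L)*L/2) - (c/(2*(2*x₂/L)) - (2*x₂/L)*ν^2/2)) := by
    rw [hk1, hk2]
    constructor <;> simp <;> linarith
  obtain ⟨k, hk, hFk⟩ := intermediate_value_Icc hkle hcont hmem
  exact ⟨k, hk, by dsimp at hFk; linarith⟩

set_option maxHeartbeats 1000000 in
theorem stmt12 (c ν L : ℝ) (hc : 0 ≤ c) (hν : 0 ≤ ν) (hL : 0 < L) (n : ℕ) :
    ∃ k ∈ Ioo (2*Real.pi*n/L) (2*Real.pi*(n+1)/L),
      Real.tan (k*L/2) = c/(2*k) - k*ν^2/2 := by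
  have hπ := Real.pi_pos
  obtain ⟨m, hm⟩ : ∃ m : ℝ, m = (2*n+1)*Real.pi/L := ⟨_, rfl⟩
  have hm0 : 0 < m := by rw [hm]; positivity
  obtain ⟨v, hv⟩ : ∃ v : ℝ, v = c/(2*m) - m*ν^2/2 := ⟨_, rfl⟩
  have hnn : (0:ℝ) ≤ (n:ℝ) := Nat.cast_nonneg n
  have hπL := mul_pos hπ hL
  have hnπ : 0 ≤ (n:ℝ)*Real.pi := mul_nonneg hnn hπ.le
  have hamb1 : 2*Real.pi*n/L < m := by
    rw [hm, div_lt_div_iff₀ hL hL]; nlinarith [hπL]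
  have hamb2 : m < 2*Real.pi*(n+1)/L := by
    rw [hm, div_lt_div_iff₀ hL hL]; nlinarith [hπL]
  rcases lt_trichotomy v 0 with hvneg | hv0 | hvpos
  · -- v < 0 : work on right half (tan negative branch)
    obtain ⟨x₂, hx2⟩ : ∃ x : ℝ, x = (n+1)*Real.pi + Real.arctan (v/2) := ⟨_, rfl⟩
    have har2 : Real.arctan (v/2) < 0 := arctan_lt_zero12 (by linarith)
    have har2' : -(Real.pi/2) < Real.arctan (v/2) := Real.neg_pi_div_two_lt_arctan _
    have hx2lt : x₂ < (n+1)*Real.pi := by rw [hx2]; linarith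
    have hx2gt : n*Real.pi + Real.pi/2 < x₂ := by rw [hx2]; linarith
    have hmk2 : m ≤ 2*x₂/L := by
      rw [hm, div_le_div_iff₀ hL hL]; nlinarith [mul_pos (sub_pos.2 hx2gt) hL]
    have hk2pos : 0 < 2*x₂/L := lt_of_lt_of_le hm0 hmk2
    obtain ⟨M, hM⟩ : ∃ M : ℝ, M = c/(2*(2*x₂/L)) - (2*x₂/L)*ν^2/2 := ⟨_, rfl⟩
    have hMv : M ≤ v := by rw [hM, hv]; exact g_anti12 c ν hc hm0 hmk2
    obtain ⟨x₁, hx1⟩ : ∃ x : ℝ, x = (n+1)*Real.pi + Real.arctan (M-1) := ⟨_, rfl⟩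
    have harle : Real.arctan (M-1) ≤ Real.arctan (v/2) :=
      Real.arctan_strictMono.monotone (by linarith)
    have har1' : -(Real.pi/2) < Real.arctan (M-1) := Real.neg_pi_div_two_lt_arctan _
    have hx12 : x₁ ≤ x₂ := by rw [hx1, hx2]; linarith
    have hx1gt : n*Real.pi + Real.pi/2 < x₁ := by rw [hx1]; linarith
    have hx1pos : 0 < x₁ := by linarith
    have htan1 : Real.tan x₁ = M-1 := by
      rw [hx1, add_comm, show ((n:ℝ)+1)*Real.pi = (n+1 : ℕ)*Real.pi by push_cast; ring,
        tan_shift12 (n+1), Real.tan_arctan]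
    have htan2 : Real.tan x₂ = v/2 := by
      rw [hx2, add_comm, show ((n:ℝ)+1)*Real.pi = (n+1 : ℕ)*Real.pi by push_cast; ring,
        tan_shift12 (n+1), Real.tan_arctan]
    have hk1pos : 0 < 2*x₁/L := by positivity
    have hManti : M ≤ c/(2*(2*x₁/L)) - (2*x₁/L)*ν^2/2 := by
      rw [hM]; exact g_anti12 c ν hc hk1pos (by gcongr)
    obtain ⟨k, hk, hkeq⟩ := ivt_aux12 c ν L x₁ x₂ hL hx1pos hx12
      (fun x hx => cos_ne_zero_right12 n (lt_of_lt_of_le hx1gt hx.1)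
        (lt_of_le_of_lt hx.2 hx2lt))
      (by rw [htan1]; linarith)
      (by rw [htan2, ← hM]; linarith)
    refine ⟨k, ⟨?_, ?_⟩, hkeq⟩
    · calc 2*Real.pi*n/L < 2*x₁/L := by
            rw [div_lt_div_iff₀ hL hL]; nlinarith [mul_pos (sub_pos.2 hx1gt) hL, hπL]
        _ ≤ k := hk.1
    · calc k ≤ 2*x₂/L := hk.2
        _ < 2*Real.pi*(n+1)/L := by
            rw [div_lt_div_iff₀ hL hL]; nlinarith [mul_pos (sub_pos.2 hx2lt) hL]
  · -- v = 0 : k = m works since tan (π/2 + nπ) = 0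
    refine ⟨m, ⟨hamb1, hamb2⟩, ?_⟩
    have hml : m*L/2 = Real.pi/2 + n*Real.pi := by
      rw [hm]; field_simp; ring
    rw [hml, ← hv, hv0, tan_shift12 n, Real.tan_pi_div_two]
  · -- v > 0 : work on left half
    obtain ⟨x₁, hx1⟩ : ∃ x : ℝ, x = n*Real.pi + Real.arctan (v/2) := ⟨_, rfl⟩
    have har1 : 0 < Real.arctan (v/2) := arctan_pos12 (by linarith)
    have har1' : Real.arctan (v/2) < Real.pi/2 := Real.arctan_lt_pi_div_two _
    have hx1gt : n*Real.pi < x₁ := by rw [hx1]; linarith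
    have hx1lt : x₁ < n*Real.pi + Real.pi/2 := by rw [hx1]; linarith
    have hx1pos : 0 < x₁ := by linarith
    have hk1pos : 0 < 2*x₁/L := by positivity
    have hk1m : 2*x₁/L ≤ m := by
      rw [hm, div_le_div_iff₀ hL hL]; nlinarith [mul_pos (sub_pos.2 hx1lt) hL]
    obtain ⟨M, hM⟩ : ∃ M : ℝ, M = c/(2*(2*x₁/L)) - (2*x₁/L)*ν^2/2 := ⟨_, rfl⟩
    have hvM : v ≤ M := by rw [hM, hv]; exact g_anti12 c ν hc hk1pos hk1m
    obtain ⟨x₂, hx2⟩ : ∃ x : ℝ, x = n*Real.pi + Real.arctan (M+1) := ⟨_, rfl⟩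
    have harle : Real.arctan (v/2) ≤ Real.arctan (M+1) :=
      Real.arctan_strictMono.monotone (by linarith)
    have har2' : Real.arctan (M+1) < Real.pi/2 := Real.arctan_lt_pi_div_two _
    have hx12 : x₁ ≤ x₂ := by rw [hx1, hx2]; linarith
    have hx2lt : x₂ < n*Real.pi + Real.pi/2 := by rw [hx2]; linarith
    have htan1 : Real.tan x₁ = v/2 := by
      rw [hx1, add_comm, tan_shift12 n, Real.tan_arctan]
    have htan2 : Real.tan x₂ = M+1 := by
      rw [hx2, add_comm, tan_shift12 n, Real.tan_arctan]
    have hManti : c/(2*(2*x₂/L)) - (2*x₂/L)*ν^2/2 ≤ M := by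
      rw [hM]; exact g_anti12 c ν hc hk1pos (by gcongr)
    obtain ⟨k, hk, hkeq⟩ := ivt_aux12 c ν L x₁ x₂ hL hx1pos hx12
      (fun x hx => cos_ne_zero_left12 n (lt_of_lt_of_le hx1gt hx.1)
        (lt_of_le_of_lt hx.2 hx2lt))
      (by rw [htan1, ← hM]; linarith)
      (by rw [htan2]; linarith)
    refine ⟨k, ⟨?_, ?_⟩, hkeq⟩
    · calc 2*Real.pi*n/L < 2*x₁/L := by
            rw [div_lt_div_iff₀ hL hL]; nlinarith
        _ ≤ k := hk.1
    · calc k ≤ 2*x₂/L := hk.2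
        _ ≤ m := by rw [hm, div_le_div_iff₀ hL hL]; nlinarith [mul_pos (sub_pos.2 hx2lt) hL]
        _ < 2*Real.pi*(n+1)/L := hamb2
end

section
/- If a wave function ψ satisfies the bosonic connection conditions of Theorem 1, namely ψ(0+) = ψ(0−) and ψ'(0+) − ψ'(0−) = (c − Eν²)ψ(0), then φ(x) := sgn(x) ψ(x) satisfies the fermionic connection conditions of Theorem 2, namely (φ(0+), φ'(0+)) = −M(φ(0−), φ'(0−)), where M is the matrix [[1,0],[c − Eν², 1]]. -/
open MeasureTheory Filter Set Topology

/-- Girardeau mapping: bosonic connection conditions for `ψ` imply fermionic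
connection conditions for `φ x = sgn x * ψ x`.  Here `pP, pM` are the one-sided
limits ψ(0+), ψ(0−) and `dP, dM` the one-sided derivatives ψ'(0+), ψ'(0−). -/
theorem stmt15 (E c ν : ℝ) (ψ : ℝ → ℝ)
    (hdiff : ∀ x, x ≠ 0 → DifferentiableAt ℝ ψ x)
    (pP pM dP dM : ℝ)
    (hpP : Tendsto ψ (𝓝[>] (0:ℝ)) (𝓝 pP))
    (hpM : Tendsto ψ (𝓝[<] (0:ℝ)) (𝓝 pM))
    (hdP : Tendsto (deriv ψ) (𝓝[>] (0:ℝ)) (𝓝 dP))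
    (hdM : Tendsto (deriv ψ) (𝓝[<] (0:ℝ)) (𝓝 dM))
    -- bosonic connection conditions of Theorem 1:
    (hcont : pP = pM) (hjump : dP - dM = (c - E*ν^2) * pP)
    (φ : ℝ → ℝ) (hφ : ∀ x, φ x = Real.sign x * ψ x) :
    -- one-sided limits of φ and its derivative:
    Tendsto φ (𝓝[>] (0:ℝ)) (𝓝 pP) ∧
    Tendsto φ (𝓝[<] (0:ℝ)) (𝓝 (-pM)) ∧
    Tendsto (deriv φ) (𝓝[>] (0:ℝ)) (𝓝 dP) ∧
    Tendsto (deriv φ) (𝓝[<] (0:ℝ)) (𝓝 (-dM)) ∧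
    -- fermionic connection conditions (φ(0+),φ'(0+)) = -[[1,0],[c-Eν²,1]] (φ(0-),φ'(0-)):
    pP = -(-pM) ∧
    dP = -((c - E*ν^2) * (-pM) + (-dM)) := by
  have hP : ∀ x ∈ Ioi (0:ℝ), φ x = ψ x := by
    intro x hx
    rw [hφ, Real.sign_of_pos hx, one_mul]
  have hM : ∀ x ∈ Iio (0:ℝ), φ x = -ψ x := by
    intro x hx
    rw [hφ, Real.sign_of_neg hx, neg_one_mul]
  have hPe : φ =ᶠ[𝓝[>] (0:ℝ)] ψ :=
    eventually_nhdsWithin_of_forall hP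
  have hMe : φ =ᶠ[𝓝[<] (0:ℝ)] (fun x => -ψ x) :=
    eventually_nhdsWithin_of_forall hM
  have hdPe : deriv φ =ᶠ[𝓝[>] (0:ℝ)] deriv ψ := by
    apply eventually_nhdsWithin_of_forall
    intro x hx
    have h : φ =ᶠ[𝓝 x] ψ :=
      eventually_of_mem (isOpen_Ioi.mem_nhds hx) hP
    exact h.deriv_eq
  have hdMe : deriv φ =ᶠ[𝓝[<] (0:ℝ)] (fun x => deriv (fun y => -ψ y) x) := by
    apply eventually_nhdsWithin_of_forall
    intro x hx
    have h : φ =ᶠ[𝓝 x] (fun y => -ψ y) :=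
      eventually_of_mem (isOpen_Iio.mem_nhds hx) hM
    exact h.deriv_eq
  have hderivneg : ∀ x : ℝ, deriv (fun y => -ψ y) x = -deriv ψ x := by
    intro x; exact deriv.neg
  refine ⟨hpP.congr' hPe.symm, ?_, hdP.congr' hdPe.symm, ?_, by rw [hcont, neg_neg], by rw [hcont] at hjump; rw [mul_neg]; linarith⟩
  · exact (hpM.neg).congr' hMe.symm
  · have : Tendsto (fun x => deriv (fun y => -ψ y) x) (𝓝[<] (0:ℝ)) (𝓝 (-dM)) := by
      simp only [hderivneg]; exact hdM.neg
    exact this.congr' hdMe.symm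
end

section
/- For the fermionic pointlike interaction on the ring [-L/2, L/2] with periodic boundary conditions, the odd function φ^{[k]}(x) = sgn(x)cos(kx) + α(k) sin(kx) with α(k) = c/(2k) − kν²/2 satisfies φ'' + k²φ = 0 for x ≠ 0, the jump condition φ(0+) − φ(0−) = (4/(c − k²ν²))φ'(0) (with φ' continuous at 0), and periodicity, if and only if tan(kL/2) = −1/α(k). -/
/-! Away from the origin `φ` coincides locally with a fixed combination `± cos (k x) + α sin (k x)`,
so it solves `φ'' = -k² φ` there, and its derivative `k (α cos (k x) - sign x · sin (k x))` is even
and continuous at `0` with value `k α`, while `φ` jumps from `-1` to `1`. Since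
`k α = (c - k² ν²) / 2`, the jump condition holds automatically. As `φ` is odd and `φ'` is even,
periodicity reduces to `φ (L/2) = 0`, i.e. `cos (kL/2) + α sin (kL/2) = 0`, which is
`tan (kL/2) = -1/α` because `α ≠ 0`. -/

open Filter Set Topology

namespace Real

theorem sign_eventuallyEq_of_ne_zero {x : ℝ} (hx : x ≠ 0) :
    Real.sign =ᶠ[𝓝 x] fun _ => Real.sign x := by
  rcases hx.lt_or_gt with h | h
  · filter_upwards [Iio_mem_nhds h] with y hy
    rw [sign_of_neg hy, sign_of_neg h]
  · filter_upwards [Ioi_mem_nhds h] with y hy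
    rw [sign_of_pos hy, sign_of_pos h]

theorem sign_mul_sin_mul (k y : ℝ) : Real.sign y * sin (k * y) = sin (k * |y|) := by
  rcases lt_trichotomy y 0 with h | rfl | h
  · rw [sign_of_neg h, abs_of_neg h, mul_neg, sin_neg, neg_one_mul]
  · simp
  · rw [sign_of_pos h, abs_of_pos h, one_mul]

theorem cos_add_mul_sin_eq_zero_iff {θ α : ℝ} (hα : α ≠ 0) :
    cos θ + α * sin θ = 0 ↔ tan θ = -1 / α := by
  rw [tan_eq_sin_div_cos]
  constructor
  · intro h
    have hcos : cos θ ≠ 0 := by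
      intro hc
      have hs : sin θ = 0 := by simpa [hc, hα] using h
      simpa [hc, hs] using sin_sq_add_cos_sq θ
    rw [div_eq_div_iff hcos hα]
    linarith
  · intro h
    have hcos : cos θ ≠ 0 := by
      intro hc
      rw [hc, div_zero, eq_comm, div_eq_zero_iff] at h
      norm_num [hα] at h
    rw [div_eq_div_iff hcos hα] at h
    linarith

end Real

open Real

/-- The general solution `a cos (k x) + b sin (k x)` of `f'' = -k² f`. -/
noncomputable def trigComb (k a b : ℝ) (x : ℝ) : ℝ := a * cos (k * x) + b * sin (k * x)

theorem continuous_trigComb (k a b : ℝ) : Continuous (trigComb k a b) := by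
  unfold trigComb; fun_prop

@[simp]
theorem trigComb_zero (k a b : ℝ) : trigComb k a b 0 = a := by simp [trigComb]

theorem hasDerivAt_trigComb (k a b x : ℝ) :
    HasDerivAt (trigComb k a b) (trigComb k (k * b) (-(k * a)) x) x := by
  have hkx : HasDerivAt (fun y => k * y) k x := by simpa using (hasDerivAt_id x).const_mul k
  exact (((hkx.cos).const_mul a).add ((hkx.sin).const_mul b)).congr_deriv
    (by simp only [trigComb]; ring)

theorem deriv_trigComb (k a b : ℝ) : deriv (trigComb k a b) = trigComb k (k * b) (-(k * a)) :=
  funext fun x => (hasDerivAt_trigComb k a b x).deriv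

theorem deriv_deriv_trigComb (k a b : ℝ) :
    deriv (deriv (trigComb k a b)) = fun x => -k ^ 2 * trigComb k a b x := by
  rw [deriv_trigComb, deriv_trigComb]
  funext x
  simp only [trigComb]; ring

/-- The paper's `φ^{[k]} x = sign x · cos (k x) + α sin (k x)`. -/
noncomputable def oddWave (k α : ℝ) (x : ℝ) : ℝ := trigComb k (Real.sign x) α x

section oddWave

variable {k α : ℝ}

theorem oddWave_neg (x : ℝ) : oddWave k α (-x) = -oddWave k α x := by
  simp only [oddWave, trigComb, Real.sign_neg, mul_neg, cos_neg, sin_neg]; ring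

theorem oddWave_eventuallyEq {x : ℝ} (hx : x ≠ 0) :
    oddWave k α =ᶠ[𝓝 x] trigComb k (Real.sign x) α := by
  filter_upwards [sign_eventuallyEq_of_ne_zero hx] with y hy
  rw [oddWave, hy]

theorem deriv_oddWave {x : ℝ} (hx : x ≠ 0) :
    deriv (oddWave k α) x = trigComb k (k * α) (-(k * Real.sign x)) x := by
  rw [(oddWave_eventuallyEq hx).deriv_eq, deriv_trigComb]

theorem deriv_oddWave_neg {x : ℝ} (hx : x ≠ 0) :
    deriv (oddWave k α) (-x) = deriv (oddWave k α) x := by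
  rw [deriv_oddWave (neg_ne_zero.mpr hx), deriv_oddWave hx]
  simp only [trigComb, Real.sign_neg, mul_neg, cos_neg, sin_neg]; ring

theorem deriv_deriv_oddWave {x : ℝ} (hx : x ≠ 0) :
    deriv (deriv (oddWave k α)) x = -k ^ 2 * oddWave k α x := by
  rw [(oddWave_eventuallyEq hx).deriv.deriv_eq, deriv_deriv_trigComb,
    (oddWave_eventuallyEq hx).eq_of_nhds]

theorem tendsto_oddWave_nhdsGT : Tendsto (oddWave k α) (𝓝[>] 0) (𝓝 1) := by
  refine (((continuous_trigComb k 1 α).tendsto' 0 1 (trigComb_zero k 1 α)).mono_left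
    nhdsWithin_le_nhds).congr' ?_
  filter_upwards [self_mem_nhdsWithin] with y (hy : 0 < y)
  rw [oddWave, Real.sign_of_pos hy]

theorem tendsto_oddWave_nhdsLT : Tendsto (oddWave k α) (𝓝[<] 0) (𝓝 (-1)) := by
  refine (((continuous_trigComb k (-1) α).tendsto' 0 (-1) (trigComb_zero k (-1) α)).mono_left
    nhdsWithin_le_nhds).congr' ?_
  filter_upwards [self_mem_nhdsWithin] with y (hy : y < 0)
  rw [oddWave, Real.sign_of_neg hy]

theorem tendsto_deriv_oddWave :
    Tendsto (deriv (oddWave k α)) (𝓝[≠] 0) (𝓝 (k * α)) := by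
  -- `sign y · sin (k y) = sin (k |y|)` removes the discontinuous factor.
  have hcont : Continuous fun y : ℝ => k * α * cos (k * y) - k * sin (k * |y|) := by fun_prop
  refine ((hcont.tendsto' 0 (k * α) (by simp)).mono_left nhdsWithin_le_nhds).congr' ?_
  filter_upwards [self_mem_nhdsWithin] with y (hy : y ≠ 0)
  rw [deriv_oddWave hy, ← sign_mul_sin_mul k y, trigComb]
  ring

end oddWave

theorem stmt16 (c ν k L : ℝ) (hk : 0 < k) (hL : 0 < L)
    (hreg : c - k^2*ν^2 ≠ 0)
    (α : ℝ) (hα : α = c/(2*k) - k*ν^2/2)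
    (φ : ℝ → ℝ)
    (hφ : ∀ x, φ x = Real.sign x * Real.cos (k*x) + α * Real.sin (k*x)) :
    ((∀ x, x ≠ 0 → deriv (deriv φ) x + k^2 * φ x = 0) ∧
     (∃ pP pM d : ℝ, Tendsto φ (𝓝[>] (0:ℝ)) (𝓝 pP) ∧
        Tendsto φ (𝓝[<] (0:ℝ)) (𝓝 pM) ∧
        Tendsto (deriv φ) (𝓝[≠] (0:ℝ)) (𝓝 d) ∧
        pP - pM = (4/(c - k^2*ν^2)) * d) ∧
     φ (L/2) = φ (-L/2) ∧ deriv φ (L/2) = deriv φ (-L/2)) ↔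
    Real.tan (k*L/2) = -1/α := by
  obtain rfl : φ = oddWave k α := funext hφ
  have hkα : k * α = (c - k ^ 2 * ν ^ 2) / 2 := by rw [hα]; field_simp
  have hα0 : α ≠ 0 := by
    rintro rfl
    exact hreg (by linarith [hkα, mul_zero k])
  have hL2 : L / 2 ≠ 0 := by positivity
  have hODE : ∀ x, x ≠ 0 → deriv (deriv (oddWave k α)) x + k ^ 2 * oddWave k α x = 0 :=
    fun x hx => by rw [deriv_deriv_oddWave hx]; ring
  have hjump : (1 : ℝ) - (-1) = 4 / (c - k ^ 2 * ν ^ 2) * (k * α) := by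
    rw [hkα]; field_simp; norm_num
  have hperiodic : oddWave k α (L / 2) = oddWave k α (-L / 2) ↔ Real.tan (k * L / 2) = -1 / α := by
    rw [neg_div, oddWave_neg, eq_neg_iff_add_eq_zero, ← two_mul, mul_eq_zero,
      or_iff_right two_ne_zero, ← cos_add_mul_sin_eq_zero_iff hα0, oddWave,
      Real.sign_of_pos (by positivity), trigComb, one_mul, mul_div_assoc]
  rw [← hperiodic, neg_div, deriv_oddWave_neg hL2]
  exact ⟨fun h => h.2.2.1, fun h => ⟨hODE, ⟨1, -1, k * α, tendsto_oddWave_nhdsGT,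
    tendsto_oddWave_nhdsLT, tendsto_deriv_oddWave, hjump⟩, h, rfl⟩⟩
end
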